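/- Let ρ be a non-singular density matrix, let f be convex on the set of density matrices and differentiable at ρ with Hermitian gradient ∇f(ρ), and let ρ(α) denote the EG update at ρ with G = ∇f(ρ). Then: (i) if ρ minimizes f over the set of density matrices, then ρ(α) = ρ for all α ≥ 0; and (ii) if ρ(α) = ρ for some α > 0, then ρ minimizes f over the set of density matrices. -/

import Mathlib

open Matrix Filter
open scoped ComplexOrder Topology

variable {d : ℕ}

/-- A density matrix: Hermitian positive semidefinite with unit trace. -/
def IsDensity (ρ : Matrix (Fin d) (Fin d) ℂ) : Prop :=
  ρ.PosSemidef ∧ ρ.trace = 1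

/-- A non-singular density matrix: positive definite with unit trace. -/
def IsNSDensity (ρ : Matrix (Fin d) (Fin d) ℂ) : Prop :=
  ρ.PosDef ∧ ρ.trace = 1

/-- Matrix logarithm via the spectral decomposition (junk value `0` if not Hermitian). -/
noncomputable def matLog (ρ : Matrix (Fin d) (Fin d) ℂ) : Matrix (Fin d) (Fin d) ℂ :=
  if h : ρ.IsHermitian then h.cfc Real.log else 0

/-- Real trace inner product of two (Hermitian) matrices: `Re tr (A B)`. -/
noncomputable def hinner (A B : Matrix (Fin d) (Fin d) ℂ) : ℝ :=
  ((A * B).trace).re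

/-- Quantum relative entropy `D(ρ,σ) = tr(ρ log ρ) − tr(ρ log σ) − tr(ρ − σ)`. -/
noncomputable def qRelEnt (ρ σ : Matrix (Fin d) (Fin d) ℂ) : ℝ :=
  ((ρ * matLog ρ).trace - (ρ * matLog σ).trace - (ρ - σ).trace).re

/-- The exponentiated-gradient (EG) update
`ρ(α) = exp(log ρ − α G) / tr exp(log ρ − α G)`. -/
noncomputable def egUpdate (ρ G : Matrix (Fin d) (Fin d) ℂ) (α : ℝ) :
    Matrix (Fin d) (Fin d) ℂ :=
  ((NormedSpace.exp (matLog ρ - α • G)).trace)⁻¹ • NormedSpace.exp (matLog ρ - α • G)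

/-- `f` has Hermitian gradient `g` at `ρ`: the derivative of `f` at `ρ` in any
Hermitian direction `X` equals `tr (g X)`. -/
def HasHermGradAt (f : Matrix (Fin d) (Fin d) ℂ → ℝ) (g ρ : Matrix (Fin d) (Fin d) ℂ) : Prop :=
  g.IsHermitian ∧ ∀ X : Matrix (Fin d) (Fin d) ℂ, X.IsHermitian →
    HasDerivAt (fun t : ℝ => f (ρ + t • X)) (hinner g X) 0

/-- Largest eigenvalue of a Hermitian matrix (junk value if not Hermitian). -/
noncomputable def lamMax (G : Matrix (Fin d) (Fin d) ℂ) : ℝ :=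
  if h : G.IsHermitian then ⨆ i, h.eigenvalues i else 0

/-- Smallest eigenvalue of a Hermitian matrix (junk value if not Hermitian). -/
noncomputable def lamMin (G : Matrix (Fin d) (Fin d) ℂ) : ℝ :=
  if h : G.IsHermitian then ⨅ i, h.eigenvalues i else 0

/-- The Armijo condition at `ρ` with step `a`, for objective `f` with gradient map `gradf`
and parameter `τ`. -/
def armijoCond (f : Matrix (Fin d) (Fin d) ℂ → ℝ)
    (gradf : Matrix (Fin d) (Fin d) ℂ → Matrix (Fin d) (Fin d) ℂ)
    (τ : ℝ) (ρ : Matrix (Fin d) (Fin d) ℂ) (a : ℝ) : Prop :=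
  f (egUpdate ρ (gradf ρ) a) ≤ f ρ + τ * hinner (gradf ρ) (egUpdate ρ (gradf ρ) a - ρ)

/-!
Both directions come down to the gradient `g` being a real multiple of the identity. At a
minimizer `ρ > 0`, small traceless Hermitian perturbations of `ρ` stay density matrices, so `f`
is stationary along them; along `X = g - (tr g / d) • 1` this says `tr (X X) = 0`, i.e. `X = 0`.
If `ρ(α) = ρ` with `α ≠ 0`, then `exp (log ρ - α g) = c ρ` with `c > 0`, and taking `log` of both
sides (legitimate since `log ∘ exp = id` on Hermitian matrices) gives `α g = -(log c) • 1`.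
Conversely, a scalar gradient shifts `log ρ` by a scalar, which the normalisation removes; and it
is orthogonal to every `σ - ρ`, so the first-order convexity inequality
`f ρ + hinner g (σ - ρ) ≤ f σ` makes `ρ` a minimizer.
-/

lemma IsStrictlyPositive.eventually_add_smul {A : Type*} [CStarAlgebra A] [PartialOrder A]
    [StarOrderedRing A] {a x : A} (ha : IsStrictlyPositive a) (hx : IsSelfAdjoint x) :
    ∀ᶠ t : ℝ in 𝓝 0, IsStrictlyPositive (a + t • x) := by
  nontriviality A
  obtain ⟨r, hr, hra⟩ := (CFC.exists_pos_algebraMap_le_iff ha.isSelfAdjoint).2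
    fun _ hs ↦ ha.spectrum_pos hs
  have hsmall : ∀ᶠ t : ℝ in 𝓝 0, ‖t • x‖ < r := by
    have : Tendsto (fun t : ℝ ↦ t • x) (𝓝 0) (𝓝 0) := by
      simpa using (tendsto_id (x := 𝓝 (0 : ℝ))).smul_const x
    exact this.norm.eventually (gt_mem_nhds (by simpa using hr))
  filter_upwards [hsmall] with t ht
  refine (isStrictlyPositive_algebraMap (A := A) (sub_pos.2 ht)).of_le ?_
  rw [map_sub, sub_eq_add_neg]
  exact add_le_add hra ((IsSelfAdjoint.all t).smul hx).neg_algebraMap_norm_le_self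

lemma NormedSpace.exp_add_algebraMap {A : Type*} [NormedRing A] [NormedAlgebra ℝ A]
    [CompleteSpace A] (a : A) (r : ℝ) :
    NormedSpace.exp (a + algebraMap ℝ A r) = Real.exp r • NormedSpace.exp a := by
  have hball : ∀ x : A, x ∈ Metric.eball 0 (expSeries ℝ A).radius := fun x ↦ by
    simp [expSeries_radius_eq_top]
  rw [exp_add_of_commute_of_mem_ball (Algebra.commutes r a).symm (hball a) (hball _),
    ← algebraMap_exp_comm, ← Algebra.commutes, Algebra.smul_def, Real.exp_eq_exp_ℝ]

lemma ConvexOn.add_le_of_hasDerivAt_segment {E : Type*} [AddCommGroup E] [Module ℝ E]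
    {s : Set E} {f : E → ℝ} (hf : ConvexOn ℝ s f) {x y : E} (hx : x ∈ s) (hy : y ∈ s) {f' : ℝ}
    (hd : HasDerivAt (fun t : ℝ ↦ f (x + t • (y - x))) f' 0) : f x + f' ≤ f y := by
  have hline : (fun t : ℝ ↦ f (x + t • (y - x))) = f ∘ AffineMap.lineMap x y := by
    ext t
    rw [Function.comp_apply, AffineMap.lineMap_apply_module', add_comm]
  rw [hline] at hd
  have hslope := (hf.comp_affineMap (AffineMap.lineMap x y)).le_slope_of_hasDerivAt
    (by simpa using hx) (by simpa using hy) zero_lt_one hd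
  simp only [slope_def_field, Function.comp_apply, AffineMap.lineMap_apply_zero,
    AffineMap.lineMap_apply_one, sub_zero, div_one] at hslope
  linarith

section MatrixCFC

open scoped Matrix.Norms.L2Operator MatrixOrder

lemma Matrix.PosDef.eventually_add_smul {n : Type*} [Fintype n] [DecidableEq n]
    {ρ X : Matrix n n ℂ} (hρ : ρ.PosDef) (hX : X.IsHermitian) :
    ∀ᶠ t : ℝ in 𝓝 0, (ρ + t • X).PosDef := by
  simp_rw [← Matrix.isStrictlyPositive_iff_posDef] at hρ ⊢
  exact hρ.eventually_add_smul hX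

lemma matLog_eq_log {ρ : Matrix (Fin d) (Fin d) ℂ} (hρ : ρ.IsHermitian) :
    matLog ρ = CFC.log ρ := by
  rw [matLog, dif_pos hρ, CFC.log, hρ.cfc_eq]

lemma exp_matLog {ρ : Matrix (Fin d) (Fin d) ℂ} (hρ : ρ.PosDef) :
    NormedSpace.exp (matLog ρ) = ρ := by
  rw [matLog_eq_log hρ.isHermitian]
  exact CFC.exp_log ρ (Matrix.isStrictlyPositive_iff_posDef.2 hρ)

lemma egUpdate_algebraMap {ρ : Matrix (Fin d) (Fin d) ℂ} (hρ : IsNSDensity ρ) (μ α : ℝ) :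
    egUpdate ρ (algebraMap ℝ _ μ) α = ρ := by
  have hshift : matLog ρ - α • algebraMap ℝ _ μ = matLog ρ + algebraMap ℝ _ (-(α * μ)) := by
    rw [Algebra.smul_def, ← map_mul, sub_eq_add_neg, ← map_neg]
  rw [egUpdate, hshift, NormedSpace.exp_add_algebraMap, exp_matLog hρ.1,
    ← Complex.coe_smul, Matrix.trace_smul, hρ.2, smul_eq_mul, mul_one,
    inv_smul_smul₀ (Complex.ofReal_ne_zero.2 (Real.exp_pos _).ne')]

lemma exists_eq_algebraMap_of_egUpdate_eq {ρ g : Matrix (Fin d) (Fin d) ℂ} (hρ : IsNSDensity ρ)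
    (hg : g.IsHermitian) {α : ℝ} (hα : α ≠ 0) (hfix : egUpdate ρ g α = ρ) :
    ∃ μ : ℝ, g = algebraMap ℝ _ μ := by
  rw [egUpdate] at hfix
  set H := matLog ρ - α • g
  have hH : IsSelfAdjoint H := (matLog_eq_log hρ.1.isHermitian ▸ IsSelfAdjoint.log).sub
    ((IsSelfAdjoint.all α).smul hg)
  set c := (NormedSpace.exp H).trace
  have hc : c ≠ 0 := by
    rintro hc
    rw [hc, _root_.inv_zero, zero_smul] at hfix
    simpa [← hfix] using hρ.2
  obtain ⟨r, hr, hrc⟩ : ∃ r > (0 : ℝ), (r : ℂ) = c :=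
    RCLike.pos_iff_exists_ofReal.1 <|
      (Matrix.nonneg_iff_posSemidef.1 hH.exp_nonneg).trace_nonneg.lt_of_ne' hc
  have hexp : NormedSpace.exp H = r • ρ := by
    rw [← Complex.coe_smul, ← hfix, hrc, smul_inv_smul₀ hc]
  have hlog : H = algebraMap ℝ _ (Real.log r) + matLog ρ := by
    rw [← CFC.log_exp H, hexp, matLog_eq_log hρ.1.isHermitian,
      CFC.log_smul' ρ hr (Matrix.isStrictlyPositive_iff_posDef.2 hρ.1)]
  have hαg : α • g = algebraMap ℝ _ (-Real.log r) := calc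
    α • g = matLog ρ - H := by simp only [H, sub_sub_cancel]
    _ = algebraMap ℝ _ (-Real.log r) := by rw [hlog, map_neg]; abel
  refine ⟨-Real.log r / α, ?_⟩
  rw [div_eq_inv_mul, map_mul, ← hαg, ← Algebra.smul_def, inv_smul_smul₀ hα]

end MatrixCFC

lemma hinner_algebraMap_left (μ : ℝ) (X : Matrix (Fin d) (Fin d) ℂ) :
    hinner (algebraMap ℝ _ μ) X = μ * X.trace.re := by
  rw [hinner, ← Algebra.smul_def, Matrix.trace_smul, Complex.real_smul, Complex.re_ofReal_mul]

lemma hinner_eq_zero_of_forall_le {f : Matrix (Fin d) (Fin d) ℂ → ℝ}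
    {ρ g X : Matrix (Fin d) (Fin d) ℂ} (hρ : IsNSDensity ρ) (hg : HasHermGradAt f g ρ)
    (hmin : ∀ σ, IsDensity σ → f ρ ≤ f σ) (hX : X.IsHermitian) (htr : X.trace = 0) :
    hinner g X = 0 := by
  have hloc : IsLocalMin (fun t : ℝ ↦ f (ρ + t • X)) 0 := by
    filter_upwards [hρ.1.eventually_add_smul hX] with t ht
    have hdens : IsDensity (ρ + t • X) := ⟨ht.posSemidef, by
      rw [Matrix.trace_add, Matrix.trace_smul, htr, smul_zero, add_zero, hρ.2]⟩
    simpa only [zero_smul, add_zero] using hmin _ hdens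
  exact hloc.hasDerivAt_eq_zero (hg.2 X hX)

lemma exists_eq_algebraMap_of_forall_hinner_eq_zero [NeZero d] {g : Matrix (Fin d) (Fin d) ℂ}
    (hg : g.IsHermitian)
    (h : ∀ X : Matrix (Fin d) (Fin d) ℂ, X.IsHermitian → X.trace = 0 → hinner g X = 0) :
    ∃ μ : ℝ, g = algebraMap ℝ _ μ := by
  set μ : ℝ := g.trace.re / d
  set X := g - algebraMap ℝ _ μ
  have hX : X.IsHermitian := hg.sub (IsSelfAdjoint.algebraMap _ (.all μ))
  have htr_re : (g.trace.re : ℂ) = g.trace := Complex.conj_eq_iff_re.1 <| by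
    simpa [Matrix.trace_conjTranspose] using congrArg Matrix.trace hg.eq
  have htr : X.trace = 0 := by
    rw [Matrix.trace_sub, Algebra.algebraMap_eq_smul_one, Matrix.trace_smul, Matrix.trace_one,
      Fintype.card_fin, ← htr_re, Complex.real_smul, Complex.ofReal_div, Complex.ofReal_natCast,
      div_mul_cancel₀ _ (Nat.cast_ne_zero.2 (NeZero.ne d)), sub_self]
  have hgX : hinner g X = hinner X X := by
    rw [hinner, show g = X + algebraMap ℝ _ μ from (sub_add_cancel g _).symm, add_mul,
      Matrix.trace_add, Complex.add_re, ← hinner, ← hinner, hinner_algebraMap_left, htr,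
      Complex.zero_re, mul_zero, add_zero]
  have hXX : (Xᴴ * X).trace = 0 := by
    have hre : (Xᴴ * X).trace.re = 0 := by
      rw [hX.eq, ← hinner, ← hgX, h X hX htr]
    exact Complex.ext hre
      (Complex.nonneg_iff.1 (Matrix.posSemidef_conjTranspose_mul_self X).trace_nonneg).2.symm
  exact ⟨μ, sub_eq_zero.1 (Matrix.trace_conjTranspose_mul_self_eq_zero_iff.1 hXX)⟩

/-- Fixed points of the EG update are exactly the minimizers: if `ρ` minimizes `f` over the
density matrices then `ρ(α) = ρ` for all `α ≥ 0`, and conversely if `ρ(α) = ρ` for some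
`α > 0` then `ρ` is a minimizer. -/
theorem eg_fixed_point_iff_minimizer [NeZero d]
    (f : Matrix (Fin d) (Fin d) ℂ → ℝ)
    (hconv : ConvexOn ℝ {σ : Matrix (Fin d) (Fin d) ℂ | IsDensity σ} f)
    (ρ g : Matrix (Fin d) (Fin d) ℂ) (hρ : IsNSDensity ρ)
    (hg : HasHermGradAt f g ρ) :
    ((∀ σ, IsDensity σ → f ρ ≤ f σ) → ∀ α ≥ (0 : ℝ), egUpdate ρ g α = ρ) ∧
      ((∃ α > (0 : ℝ), egUpdate ρ g α = ρ) → ∀ σ, IsDensity σ → f ρ ≤ f σ) := by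
  refine ⟨fun hmin α _ ↦ ?_, fun ⟨α, hα, hfix⟩ σ hσ ↦ ?_⟩
  · obtain ⟨μ, rfl⟩ := exists_eq_algebraMap_of_forall_hinner_eq_zero hg.1
      fun X hX htr ↦ hinner_eq_zero_of_forall_le hρ hg hmin hX htr
    exact egUpdate_algebraMap hρ μ α
  · obtain ⟨μ, rfl⟩ := exists_eq_algebraMap_of_egUpdate_eq hρ hg.1 hα.ne' hfix
    have hgrad := hconv.add_le_of_hasDerivAt_segment ⟨hρ.1.posSemidef, hρ.2⟩ hσ
      (hg.2 _ (hσ.1.1.sub hρ.1.1))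
    rwa [hinner_algebraMap_left, Matrix.trace_sub, hσ.2, hρ.2, sub_self, Complex.zero_re,
      mul_zero, add_zero] at hgrad
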